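/- Let X take values in {0,1}^m (m > 1) uniformly, let J be uniform on {1,...,m} independent of X, and let Z = (J, X_J). Suppose U is a finite random variable jointly distributed with (X, Z) satisfying the Markov chains Z - U - X and U - Z - X. Then Z is a deterministic function of U, and consequently I(U; Z | X) = H(Z | X) = log m (in bits). -/

import Mathlib

open Finset

open Classical in
noncomputable def prob {Ω α : Type*} [Fintype Ω] (p : Ω → ℝ) (X : Ω → α) (x : α) : ℝ :=
  ∑ ω, if X ω = x then p ω else 0

noncomputable def H2 {Ω α : Type*} [Fintype Ω] [Fintype α] (p : Ω → ℝ) (X : Ω → α) : ℝ :=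
  -∑ x, prob p X x * Real.logb 2 (prob p X x)

noncomputable def condH {Ω α β : Type*} [Fintype Ω] [Fintype α] [Fintype β]
    (p : Ω → ℝ) (X : Ω → α) (Y : Ω → β) : ℝ :=
  -∑ x, ∑ y, prob p (fun ω => (X ω, Y ω)) (x, y) *
      Real.logb 2 (prob p (fun ω => (X ω, Y ω)) (x, y) / prob p Y y)

noncomputable def MI {Ω α β : Type*} [Fintype Ω] [Fintype α] [Fintype β]
    (p : Ω → ℝ) (X : Ω → α) (Y : Ω → β) : ℝ :=
  ∑ x, ∑ y, prob p (fun ω => (X ω, Y ω)) (x, y) *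
      Real.logb 2 (prob p (fun ω => (X ω, Y ω)) (x, y) / (prob p X x * prob p Y y))

noncomputable def condMI {Ω α β γ : Type*} [Fintype Ω] [Fintype α] [Fintype β] [Fintype γ]
    (p : Ω → ℝ) (X : Ω → α) (Y : Ω → β) (Z : Ω → γ) : ℝ :=
  ∑ x, ∑ y, ∑ z, prob p (fun ω => (X ω, Y ω, Z ω)) (x, y, z) *
      Real.logb 2 (prob p (fun ω => (X ω, Y ω, Z ω)) (x, y, z) * prob p Z z /
        (prob p (fun ω => (X ω, Z ω)) (x, z) * prob p (fun ω => (Y ω, Z ω)) (y, z)))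

def IsPMF {Ω : Type*} [Fintype Ω] (p : Ω → ℝ) : Prop :=
  (∀ ω, 0 ≤ p ω) ∧ ∑ ω, p ω = 1

def MarkovChain {Ω α β γ : Type*} [Fintype Ω] (p : Ω → ℝ)
    (A : Ω → α) (B : Ω → β) (C : Ω → γ) : Prop :=
  ∀ a b c, prob p (fun ω => (A ω, B ω, C ω)) (a, b, c) * prob p B b =
    prob p (fun ω => (A ω, B ω)) (a, b) * prob p (fun ω => (C ω, B ω)) (c, b)

section Helpers
variable {Ω α β : Type*} [Fintype Ω]

lemma prob_congr (p : Ω → ℝ) (A : Ω → α) (B : Ω → β) (a : α) (b : β)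
    (h : ∀ ω, A ω = a ↔ B ω = b) : prob p A a = prob p B b := by
  unfold prob
  refine Finset.sum_congr rfl fun ω _ => ?_
  by_cases hc : A ω = a
  · rw [if_pos hc, if_pos ((h ω).mp hc)]
  · rw [if_neg hc, if_neg fun hb => hc ((h ω).mpr hb)]

lemma prob_nonneg (p : Ω → ℝ) (hp : ∀ ω, 0 ≤ p ω) (A : Ω → α) (a : α) :
    0 ≤ prob p A a := by
  unfold prob
  refine Finset.sum_nonneg fun ω _ => ?_
  split
  · exact hp ω
  · exact le_rfl

lemma le_prob (p : Ω → ℝ) (hp : ∀ ω, 0 ≤ p ω) (A : Ω → α) (ω : Ω) :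
    p ω ≤ prob p A (A ω) := by
  classical
  unfold prob
  have h := Finset.single_le_sum (f := fun ω' => if A ω' = A ω then p ω' else 0)
    (fun i _ => by split <;> [exact hp i; exact le_rfl]) (Finset.mem_univ ω)
  simpa using h

lemma exists_of_prob_pos (p : Ω → ℝ) (hp : ∀ ω, 0 ≤ p ω) (A : Ω → α) (a : α)
    (h : 0 < prob p A a) : ∃ ω, 0 < p ω ∧ A ω = a := by
  unfold prob at h
  obtain ⟨ω, -, hω⟩ := Finset.exists_ne_zero_of_sum_ne_zero h.ne'
  by_cases hA : A ω = a
  · rw [if_pos hA] at hω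
    exact ⟨ω, (hp ω).lt_of_ne' hω, hA⟩
  · rw [if_neg hA] at hω
    exact absurd rfl hω

lemma prob_marg_snd [Fintype β] (p : Ω → ℝ) (A : Ω → α) (B : Ω → β) (a : α) :
    prob p A a = ∑ b, prob p (fun ω => (A ω, B ω)) (a, b) := by
  classical
  unfold prob
  rw [Finset.sum_comm]
  refine Finset.sum_congr rfl fun ω _ => ?_
  rw [Finset.sum_eq_single (B ω)]
  · by_cases hc : A ω = a
    · rw [if_pos hc, if_pos (by simp [hc])]
    · rw [if_neg hc, if_neg (by simp [Prod.ext_iff]; intro h; exact absurd h hc)]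
  · intro b _ hb
    rw [if_neg (by simp [Prod.ext_iff]; intro _ h; exact absurd h.symm hb)]
  · intro h; exact absurd (Finset.mem_univ _) h

lemma prob_marg_fst [Fintype α] (p : Ω → ℝ) (A : Ω → α) (B : Ω → β) (b : β) :
    prob p B b = ∑ a, prob p (fun ω => (A ω, B ω)) (a, b) := by
  classical
  unfold prob
  rw [Finset.sum_comm]
  refine Finset.sum_congr rfl fun ω _ => ?_
  rw [Finset.sum_eq_single (A ω)]
  · by_cases hc : B ω = b
    · rw [if_pos hc, if_pos (by simp [hc])]
    · rw [if_neg hc, if_neg (by simp [Prod.ext_iff]; intro h; exact absurd h hc)]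
  · intro a _ ha
    rw [if_neg (by simp [Prod.ext_iff]; intro h _; exact absurd h.symm ha)]
  · intro h; exact absurd (Finset.mem_univ _) h

lemma sum_prob [Fintype α] (p : Ω → ℝ) (A : Ω → α) : ∑ a, prob p A a = ∑ ω, p ω := by
  classical
  unfold prob
  rw [Finset.sum_comm]
  refine Finset.sum_congr rfl fun ω _ => ?_
  rw [Finset.sum_eq_single (A ω)]
  · rw [if_pos rfl]
  · intro a _ ha; rw [if_neg fun h => ha h.symm]
  · intro h; exact absurd (Finset.mem_univ _) h

end Helpers

/-- for X uniform on {0,1}^m, J uniform on [m] independent of X and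
Z = (J, X_J), any U with Z - U - X and U - Z - X determines Z, and
I(U; Z | X) = H(Z | X) = log m bits. -/
theorem stmt15 {Ω 𝒰 : Type*} [Fintype Ω] [Fintype 𝒰]
    (m : ℕ) (hm : 1 < m) (p : Ω → ℝ) (hp : IsPMF p)
    (X : Ω → (Fin m → Bool)) (J : Ω → Fin m) (U : Ω → 𝒰)
    (hdist : ∀ x j, prob p (fun ω => (X ω, J ω)) (x, j) = 1 / (2 ^ m * (m : ℝ)))
    (h1 : MarkovChain p (fun ω => (J ω, X ω (J ω))) U X)
    (h2 : MarkovChain p U (fun ω => (J ω, X ω (J ω))) X) :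
    (∃ f : 𝒰 → Fin m × Bool, ∀ ω, 0 < p ω → (J ω, X ω (J ω)) = f (U ω)) ∧
      condMI p U (fun ω => (J ω, X ω (J ω))) X = Real.logb 2 m ∧
      condH p (fun ω => (J ω, X ω (J ω))) X = Real.logb 2 m := by
  classical
  obtain ⟨hp0, hp1⟩ := hp
  have hmR : (0:ℝ) < m := by exact_mod_cast Nat.lt_of_lt_of_le Nat.zero_lt_one hm.le
  have hc : (0:ℝ) < 1 / (2 ^ m * (m:ℝ)) := by positivity
  -- joint distribution of Z=(J, X_J) and X
  have hZX : ∀ (z : Fin m × Bool) (x : Fin m → Bool),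
      prob p (fun ω => ((J ω, X ω (J ω)), X ω)) (z, x)
        = if x z.1 = z.2 then 1 / (2 ^ m * (m:ℝ)) else 0 := by
    intro z x
    by_cases hb : x z.1 = z.2
    · rw [if_pos hb, prob_congr p _ (fun ω => (X ω, J ω)) _ (x, z.1) ?_, hdist]
      intro ω
      simp only [Prod.ext_iff]
      constructor
      · rintro ⟨⟨hj, _⟩, hx⟩
        exact ⟨hx, hj⟩
      · rintro ⟨hx, hj⟩
        refine ⟨⟨hj, ?_⟩, hx⟩
        rw [hx, hj]; exact hb
    · rw [if_neg hb]
      unfold prob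
      refine Finset.sum_eq_zero fun ω _ => ?_
      rw [if_neg]
      intro h
      simp only [Prod.ext_iff] at h
      obtain ⟨⟨hj, hv⟩, hx⟩ := h
      exact hb (by rw [← hx, ← hj]; exact hv)
  -- marginal of X
  have hXp : ∀ x, prob p X x = (m:ℝ) * (1 / (2 ^ m * (m:ℝ))) := by
    intro x
    rw [prob_marg_snd p X J x]
    simp only [hdist]
    rw [Finset.sum_const, Finset.card_univ, Fintype.card_fin, nsmul_eq_mul]
  -- marginal of Z is positive
  have hZpos : ∀ z : Fin m × Bool, 0 < prob p (fun ω => (J ω, X ω (J ω))) z := by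
    intro z
    rw [prob_marg_snd p _ X z]
    have key : (0:ℝ) < prob p (fun ω => ((J ω, X ω (J ω)), X ω)) (z, fun _ => z.2) := by
      rw [hZX, if_pos rfl]; exact hc
    exact lt_of_lt_of_le key (Finset.single_le_sum
      (f := fun x => prob p (fun ω => ((J ω, X ω (J ω)), X ω)) (z, x))
      (fun x _ => prob_nonneg p hp0 _ _) (Finset.mem_univ (fun _ => z.2)))
  -- existence of distinguishing x
  have hxex : ∀ z z' : Fin m × Bool, z ≠ z' →
      ∃ x : Fin m → Bool, x z.1 = z.2 ∧ x z'.1 ≠ z'.2 := by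
    intro z z' hne
    by_cases hj : z.1 = z'.1
    · refine ⟨fun _ => z.2, rfl, fun h => hne (Prod.ext hj h)⟩
    · refine ⟨Function.update (fun _ => z.2) z'.1 (!z'.2), ?_, ?_⟩
      · rw [Function.update_of_ne hj]
      · rw [Function.update_self]
        simp
  -- uniqueness
  have huniq : ∀ (u : 𝒰) (z z' : Fin m × Bool),
      0 < prob p (fun ω => ((J ω, X ω (J ω)), U ω)) (z, u) →
      0 < prob p (fun ω => ((J ω, X ω (J ω)), U ω)) (z', u) → z = z' := by
    intro u z z' hz hz'
    by_contra hne
    obtain ⟨x, hx1, hx2⟩ := hxex z z' hne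
    have hU : 0 < prob p U u := by
      rw [prob_marg_fst p (fun ω => (J ω, X ω (J ω))) U u]
      exact lt_of_lt_of_le hz (Finset.single_le_sum
        (f := fun a => prob p (fun ω => ((J ω, X ω (J ω)), U ω)) (a, u))
        (fun w _ => prob_nonneg p hp0 _ _) (Finset.mem_univ z))
    have hUZ : 0 < prob p (fun ω => (U ω, (J ω, X ω (J ω)))) (u, z) := by
      rw [prob_congr p _ (fun ω => ((J ω, X ω (J ω)), U ω)) _ (z, u)
        (fun ω => by simp [Prod.ext_iff]; tauto)]
      exact hz
    have hUZ' : 0 < prob p (fun ω => (U ω, (J ω, X ω (J ω)))) (u, z') := by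
      rw [prob_congr p _ (fun ω => ((J ω, X ω (J ω)), U ω)) _ (z', u)
        (fun ω => by simp [Prod.ext_iff]; tauto)]
      exact hz'
    have hXZ : prob p (fun ω => (X ω, (J ω, X ω (J ω)))) (x, z)
        = 1 / (2 ^ m * (m:ℝ)) := by
      rw [prob_congr p _ (fun ω => ((J ω, X ω (J ω)), X ω)) _ (z, x)
        (fun ω => by simp [Prod.ext_iff]; tauto), hZX]
      rw [if_pos hx1]
    have hXZ' : prob p (fun ω => (X ω, (J ω, X ω (J ω)))) (x, z') = 0 := by
      rw [prob_congr p _ (fun ω => ((J ω, X ω (J ω)), X ω)) _ (z', x)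
        (fun ω => by simp [Prod.ext_iff]; tauto), hZX]
      rw [if_neg hx2]
    -- h2 at (u, z, x): triple (U, Z, X) positive
    have e2 := h2 u z x
    rw [hXZ] at e2
    have hUZXpos : 0 < prob p (fun ω => (U ω, (J ω, X ω (J ω)), X ω)) (u, z, x) := by
      have hrhs : 0 < prob p (fun ω => (U ω, (J ω, X ω (J ω)))) (u, z) *
          (1 / (2 ^ m * (m:ℝ))) := mul_pos hUZ hc
      rw [← e2] at hrhs
      rcases (prob_nonneg p hp0 (fun ω => (U ω, (J ω, X ω (J ω)), X ω)) (u, z, x)).eq_or_lt with h0 | h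
      · rw [← h0, zero_mul] at hrhs; exact absurd hrhs (lt_irrefl 0)
      · exact h
    -- h1 at (z, u, x): prob (X,U) positive
    have e1 := h1 z u x
    have hZUXpos : 0 < prob p (fun ω => ((J ω, X ω (J ω)), U ω, X ω)) (z, u, x) := by
      rw [prob_congr p _ (fun ω => (U ω, (J ω, X ω (J ω)), X ω)) _ (u, z, x)
        (fun ω => by simp [Prod.ext_iff]; tauto)]
      exact hUZXpos
    have hXU : 0 < prob p (fun ω => (X ω, U ω)) (x, u) := by
      have hl : 0 < prob p (fun ω => ((J ω, X ω (J ω)), U ω, X ω)) (z, u, x) * prob p U u :=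
        mul_pos hZUXpos hU
      rw [e1] at hl
      rcases (prob_nonneg p hp0 (fun ω => (X ω, U ω)) (x, u)).eq_or_lt with h0 | h
      · rw [← h0, mul_zero] at hl; exact absurd hl (lt_irrefl 0)
      · exact h
    -- h1 at (z', u, x): triple (Z', U, X) positive
    have e1' := h1 z' u x
    have hZ'UXpos : 0 < prob p (fun ω => ((J ω, X ω (J ω)), U ω, X ω)) (z', u, x) := by
      have hrhs : 0 < prob p (fun ω => ((J ω, X ω (J ω)), U ω)) (z', u) *
          prob p (fun ω => (X ω, U ω)) (x, u) := mul_pos hz' hXU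
      rw [← e1'] at hrhs
      rcases (prob_nonneg p hp0 (fun ω => ((J ω, X ω (J ω)), U ω, X ω)) (z', u, x)).eq_or_lt with h0 | h
      · rw [← h0, zero_mul] at hrhs; exact absurd hrhs (lt_irrefl 0)
      · exact h
    -- h2 at (u, z', x): contradiction
    have e2' := h2 u z' x
    rw [hXZ', mul_zero] at e2'
    have hUZ'Xpos : 0 < prob p (fun ω => (U ω, (J ω, X ω (J ω)), X ω)) (u, z', x) := by
      rw [prob_congr p _ (fun ω => ((J ω, X ω (J ω)), U ω, X ω)) _ (z', u, x)
        (fun ω => by simp [Prod.ext_iff]; tauto)]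
      exact hZ'UXpos
    have := mul_pos hUZ'Xpos (hZpos z')
    rw [e2'] at this
    exact absurd this (lt_irrefl 0)
  -- the function f
  let f : 𝒰 → Fin m × Bool := fun u =>
    if h : ∃ z, 0 < prob p (fun ω => ((J ω, X ω (J ω)), U ω)) (z, u) then h.choose
    else (⟨0, by omega⟩, true)
  have hf : ∀ (u : 𝒰) (z : Fin m × Bool),
      0 < prob p (fun ω => ((J ω, X ω (J ω)), U ω)) (z, u) → f u = z := by
    intro u z h
    have hex : ∃ z', 0 < prob p (fun ω => ((J ω, X ω (J ω)), U ω)) (z', u) := ⟨z, h⟩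
    have : f u = hex.choose := dif_pos hex
    rw [this]
    exact huniq u hex.choose z hex.choose_spec h
  have hfω : ∀ ω, 0 < p ω → (J ω, X ω (J ω)) = f (U ω) := by
    intro ω hω
    exact (hf (U ω) (J ω, X ω (J ω))
      (lt_of_lt_of_le hω (le_prob p hp0 (fun ω => ((J ω, X ω (J ω)), U ω)) ω))).symm
  refine ⟨⟨f, hfω⟩, ?_, ?_⟩
  · -- condMI = logb 2 m
    simp only [condMI]
    have hUZX : ∀ (u : 𝒰) (z : Fin m × Bool) (x : Fin m → Bool),
        prob p (fun ω => (U ω, (J ω, X ω (J ω)), X ω)) (u, z, x)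
        = if z = f u then prob p (fun ω => (U ω, X ω)) (u, x) else 0 := by
      intro u z x
      by_cases hzf : z = f u
      · rw [if_pos hzf]
        unfold prob
        refine Finset.sum_congr rfl fun ω _ => ?_
        rcases (hp0 ω).eq_or_lt with h0 | hpos
        · rw [← h0]
          simp
        · have hZω := hfω ω hpos
          by_cases hU : U ω = u
          · by_cases hX : X ω = x
            · rw [if_pos (by
                have h' : (J ω, X ω (J ω)) = f u := by rw [hZω, hU]
                simp [Prod.ext_iff, hU, hX, hzf, ← h']),
                if_pos (by simp [Prod.ext_iff, hU, hX])]
            · rw [if_neg (by simp [Prod.ext_iff, hX]), if_neg (by simp [Prod.ext_iff, hX])]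
          · rw [if_neg (by simp [Prod.ext_iff, hU]), if_neg (by simp [Prod.ext_iff, hU])]
      · rw [if_neg hzf]
        unfold prob
        refine Finset.sum_eq_zero fun ω _ => ?_
        by_cases hcond : (fun ω => (U ω, (J ω, X ω (J ω)), X ω)) ω = (u, z, x)
        · rw [if_pos hcond]
          obtain ⟨hU, hZ, hX⟩ : U ω = u ∧ (J ω, X ω (J ω)) = z ∧ X ω = x := by
            simpa [Prod.ext_iff] using hcond
          rcases (hp0 ω).eq_or_lt with h0 | hpos
          · exact h0.symm
          · exact absurd (by rw [← hZ, hfω ω hpos, hU]) hzf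
        · rw [if_neg hcond]
    have hfx : ∀ u x, 0 < prob p (fun ω => (U ω, X ω)) (u, x) → x (f u).1 = (f u).2 := by
      intro u x h
      obtain ⟨ω, hpω, hω⟩ := exists_of_prob_pos p hp0 _ _ h
      obtain ⟨hU, hX⟩ : U ω = u ∧ X ω = x := by simpa [Prod.ext_iff] using hω
      have hZω := hfω ω hpω
      rw [hU] at hZω
      rw [← hZω]
      dsimp only
      rw [hX]
    have key : ∀ (u : 𝒰) (x : Fin m → Bool),
        (∑ z : Fin m × Bool,
          prob p (fun ω => (U ω, (J ω, X ω (J ω)), X ω)) (u, z, x) *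
            Real.logb 2 (prob p (fun ω => (U ω, (J ω, X ω (J ω)), X ω)) (u, z, x) * prob p X x /
              (prob p (fun ω => (U ω, X ω)) (u, x) *
               prob p (fun ω => ((J ω, X ω (J ω)), X ω)) (z, x))))
        = prob p (fun ω => (U ω, X ω)) (u, x) * Real.logb 2 m := by
      intro u x
      rw [Finset.sum_eq_single (f u)]
      · rw [hUZX, if_pos rfl]
        rcases (prob_nonneg p hp0 (fun ω => (U ω, X ω)) (u, x)).eq_or_lt with h0 | hq
        · rw [← h0, zero_mul, zero_mul]
        · have hx := hfx u x hq
          rw [hZX, if_pos hx, hXp]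
          congr 1
          have harg : prob p (fun ω => (U ω, X ω)) (u, x) * ((m:ℝ) * (1 / (2 ^ m * (m:ℝ)))) /
              (prob p (fun ω => (U ω, X ω)) (u, x) * (1 / (2 ^ m * (m:ℝ)))) = (m:ℝ) := by
            rw [mul_div_mul_left _ _ hq.ne']
            rw [mul_div_assoc, div_self hc.ne', mul_one]
          rw [harg]
      · intro z _ hz
        rw [hUZX, if_neg hz, zero_mul]
      · intro h; exact absurd (Finset.mem_univ _) h
    have swap : (∑ u : 𝒰, ∑ z : Fin m × Bool, ∑ x : Fin m → Bool,
          prob p (fun ω => (U ω, (J ω, X ω (J ω)), X ω)) (u, z, x) *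
            Real.logb 2 (prob p (fun ω => (U ω, (J ω, X ω (J ω)), X ω)) (u, z, x) * prob p X x /
              (prob p (fun ω => (U ω, X ω)) (u, x) *
               prob p (fun ω => ((J ω, X ω (J ω)), X ω)) (z, x))))
        = ∑ u : 𝒰, ∑ x : Fin m → Bool, ∑ z : Fin m × Bool,
          prob p (fun ω => (U ω, (J ω, X ω (J ω)), X ω)) (u, z, x) *
            Real.logb 2 (prob p (fun ω => (U ω, (J ω, X ω (J ω)), X ω)) (u, z, x) * prob p X x /
              (prob p (fun ω => (U ω, X ω)) (u, x) *
               prob p (fun ω => ((J ω, X ω (J ω)), X ω)) (z, x))) :=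
      Finset.sum_congr rfl fun u _ => Finset.sum_comm
    rw [swap]
    have tot : ∑ u : 𝒰, ∑ x : Fin m → Bool, prob p (fun ω => (U ω, X ω)) (u, x) = 1 := by
      have h := sum_prob p (fun ω => (U ω, X ω))
      rw [hp1] at h
      rw [← Fintype.sum_prod_type]
      exact h
    calc (∑ u : 𝒰, ∑ x : Fin m → Bool, ∑ z : Fin m × Bool,
          prob p (fun ω => (U ω, (J ω, X ω (J ω)), X ω)) (u, z, x) *
            Real.logb 2 (prob p (fun ω => (U ω, (J ω, X ω (J ω)), X ω)) (u, z, x) * prob p X x /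
              (prob p (fun ω => (U ω, X ω)) (u, x) *
               prob p (fun ω => ((J ω, X ω (J ω)), X ω)) (z, x))))
        = ∑ u : 𝒰, ∑ x : Fin m → Bool,
            prob p (fun ω => (U ω, X ω)) (u, x) * Real.logb 2 m :=
          Finset.sum_congr rfl fun u _ => Finset.sum_congr rfl fun x _ => key u x
      _ = (∑ u : 𝒰, ∑ x : Fin m → Bool, prob p (fun ω => (U ω, X ω)) (u, x)) * Real.logb 2 m := by
          rw [Finset.sum_mul]
          exact Finset.sum_congr rfl fun u _ => (Finset.sum_mul _ _ _).symm
      _ = Real.logb 2 m := by rw [tot, one_mul]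
  · -- condH = logb 2 m
    simp only [condH]
    have e1 : ∀ (z : Fin m × Bool) (x : Fin m → Bool),
        prob p (fun ω => ((J ω, X ω (J ω)), X ω)) (z, x) *
          Real.logb 2 (prob p (fun ω => ((J ω, X ω (J ω)), X ω)) (z, x) / prob p X x)
        = if x z.1 = z.2 then (1 / (2 ^ m * (m:ℝ))) * Real.logb 2 ((m:ℝ))⁻¹ else 0 := by
      intro z x
      rw [hZX, hXp]
      by_cases hb : x z.1 = z.2
      · rw [if_pos hb, if_pos hb]
        congr 2
        rw [div_eq_iff (by positivity)]
        field_simp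
      · rw [if_neg hb, if_neg hb, zero_mul]
    simp only [e1]
    have count : (∑ z : Fin m × Bool, ∑ x : Fin m → Bool,
        (if x z.1 = z.2 then (1 / (2 ^ m * (m:ℝ))) * Real.logb 2 ((m:ℝ))⁻¹ else 0))
        = (m : ℝ) * 2 ^ m * ((1 / (2 ^ m * (m:ℝ))) * Real.logb 2 ((m:ℝ))⁻¹) := by
      rw [Fintype.sum_prod_type]
      have inner : ∀ j : Fin m, (∑ b : Bool, ∑ x : Fin m → Bool,
          (if x j = b then (1 / (2 ^ m * (m:ℝ))) * Real.logb 2 ((m:ℝ))⁻¹ else 0))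
          = (2:ℝ) ^ m * ((1 / (2 ^ m * (m:ℝ))) * Real.logb 2 ((m:ℝ))⁻¹) := by
        intro j
        rw [Finset.sum_comm]
        have hcollapse : ∀ x : Fin m → Bool, (∑ b : Bool,
            (if x j = b then (1 / (2 ^ m * (m:ℝ))) * Real.logb 2 ((m:ℝ))⁻¹ else 0))
            = (1 / (2 ^ m * (m:ℝ))) * Real.logb 2 ((m:ℝ))⁻¹ := by
          intro x
          rw [Finset.sum_eq_single (x j)]
          · rw [if_pos rfl]
          · intro b _ hb; rw [if_neg fun h => hb h.symm]
          · intro h; exact absurd (Finset.mem_univ _) h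
        simp only [hcollapse]
        rw [Finset.sum_const, Finset.card_univ]
        simp only [Fintype.card_fun, Fintype.card_bool, Fintype.card_fin, nsmul_eq_mul]
        push_cast
        ring
      simp only [inner]
      rw [Finset.sum_const, Finset.card_univ, Fintype.card_fin, nsmul_eq_mul]
      ring
    rw [count, Real.logb_inv]
    have h2m : (2:ℝ) ^ m ≠ 0 := by positivity
    field_simp
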